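/- arXiv:2402.02808 — 2 statements merged into one kernel-verified Lean document; each statement's English description precedes it below -/
import Mathlib

section
/- Let η(x) = (4/π)·exp(−|x|²) for x ∈ ℝ² and η_σ(x) = σ^{−2}·η(x/σ) for σ > 0. Then for every polynomial p : ℝ² → ℝ of total degree at most 3, every x ∈ ℝ², and every σ > 0, σ^{−2}·∫_{ℝ²} η_σ(x − y)·(p(y) − p(x)) dy = Δp(x), where Δp = ∂²p/∂x₁² + ∂²p/∂x₂²; i.e., the integral approximation of the Laplacian used in the weighted particle method is exact on polynomials of degree up to 3. -/
/-!
The kernel factorises as `η_σ(x - y) = (4 / (π σ²)) g(x₁ - y₁) g(x₂ - y₂)` with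
`g(u) = exp (-u² / σ²)`, so on a monomial `y₁ᵃ y₂ᵇ` the integral is a product of two shifted
one-dimensional Gaussian moments. Since the odd moments vanish and the second one is
`√(π/β) / (2β)`, for `k ≤ 3` we get `∫ exp (-β (c - t)²) tᵏ dt = √(π/β) (cᵏ + k(k-1)/(4β) cᵏ⁻²)`.
With `β = σ⁻²` the product is `4 x₁ᵃ x₂ᵇ + σ² Δ(x₁ᵃ x₂ᵇ)` plus a term carrying
`a(a-1) b(b-1)`, which vanishes because `a + b ≤ 3`. By linearity
`∫ η_σ(x - y) p(y) dy = 4 p(x) + σ² Δp(x)`, and `p = 1` gives `∫ η_σ = 4`.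
-/

open MeasureTheory MvPolynomial

/-- The Gaussian kernel `η(x) = (4/π) exp(-|x|²)` on `ℝ²`. -/
noncomputable def gaussEta (z : ℝ × ℝ) : ℝ :=
  (4 / Real.pi) * Real.exp (-(z.1 ^ 2 + z.2 ^ 2))

/-- The scaled kernel `η_σ(x) = σ⁻² η(x/σ)`. -/
noncomputable def gaussEtaScaled (σ : ℝ) (z : ℝ × ℝ) : ℝ :=
  (σ ^ 2)⁻¹ * gaussEta (z.1 / σ, z.2 / σ)

open Real

section GaussianMoments

variable {b : ℝ}

lemma integrable_pow_mul_exp_neg_mul_sq (hb : 0 < b) (k : ℕ) :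
    Integrable fun u : ℝ => u ^ k * exp (-b * u ^ 2) := by
  simpa [Real.rpow_natCast] using
    integrable_rpow_mul_exp_neg_mul_sq hb (s := k) (by linarith [(k.cast_nonneg : (0 : ℝ) ≤ k)])

lemma integral_pow_mul_exp_neg_mul_sq_of_odd {k : ℕ} (hk : Odd k) :
    ∫ u : ℝ, u ^ k * exp (-b * u ^ 2) = 0 := by
  have h := integral_neg_eq_self (fun u : ℝ => u ^ k * exp (-b * u ^ 2)) volume
  simp only [hk.neg_pow, neg_sq, neg_mul, integral_neg] at h ⊢
  linarith

lemma integral_sq_mul_exp_neg_mul_sq (hb : 0 < b) :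
    ∫ u : ℝ, u ^ 2 * exp (-b * u ^ 2) = √(π / b) / (2 * b) := by
  have hv (u : ℝ) :
      HasDerivAt (fun u => exp (-b * u ^ 2)) (-(2 * b) * (u * exp (-b * u ^ 2))) u := by
    convert ((hasDerivAt_pow 2 u).const_mul (-b)).exp using 1
    ring
  have hparts := integral_mul_deriv_eq_deriv_mul_of_integrable (u := fun u : ℝ => u)
    (u' := fun _ => 1) (fun u _ => hasDerivAt_id u) (fun u _ => hv u)
    (((integrable_pow_mul_exp_neg_mul_sq hb 2).const_mul (-(2 * b))).congr
      (Filter.Eventually.of_forall fun u => by simp only [Pi.mul_apply]; ring))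
    (by simpa only [Pi.mul_def, one_mul] using integrable_exp_neg_mul_sq hb)
    (by simpa only [Pi.mul_def, pow_one] using integrable_pow_mul_exp_neg_mul_sq hb 1)
  simp only [one_mul, integral_gaussian] at hparts
  have hlhs : ∫ u : ℝ, u * (-(2 * b) * (u * exp (-b * u ^ 2))) =
      -(2 * b) * ∫ u : ℝ, u ^ 2 * exp (-b * u ^ 2) := by
    rw [← integral_const_mul]; congr 1; ext u; ring
  rw [hlhs] at hparts
  rw [eq_div_iff (by positivity)]
  linarith

lemma exp_neg_mul_sq_mul_add_pow (c u : ℝ) (k : ℕ) :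
    exp (-b * u ^ 2) * (u + c) ^ k =
      ∑ j ∈ Finset.range (k + 1), c ^ (k - j) * k.choose j * (u ^ j * exp (-b * u ^ 2)) := by
  rw [add_pow, Finset.mul_sum]
  exact Finset.sum_congr rfl fun j _ => by ring

lemma integrable_exp_neg_mul_sq_sub_mul_pow (hb : 0 < b) (c : ℝ) (k : ℕ) :
    Integrable fun t : ℝ => exp (-b * (c - t) ^ 2) * t ^ k := by
  have h : Integrable fun u : ℝ => exp (-b * u ^ 2) * (u + c) ^ k := by
    simp_rw [exp_neg_mul_sq_mul_add_pow]
    exact integrable_finsetSum _ fun j _ => (integrable_pow_mul_exp_neg_mul_sq hb j).const_mul _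
  refine (h.comp_sub_right c).congr (Filter.Eventually.of_forall fun t => ?_)
  dsimp only
  rw [sub_add_cancel, ← neg_sub c t, neg_sq]

-- The truncated `k - 1` and `k - 2` only occur where the factor `k * (k - 1)` vanishes.
lemma integral_exp_neg_mul_sq_sub_mul_pow (hb : 0 < b) (c : ℝ) {k : ℕ} (hk : k ≤ 3) :
    ∫ t : ℝ, exp (-b * (c - t) ^ 2) * t ^ k =
      √(π / b) * (c ^ k + (k * (k - 1) : ℕ) / (4 * b) * c ^ (k - 2)) := by
  rw [← integral_add_right_eq_self _ c]
  simp only [sub_add_cancel_right, neg_sq, exp_neg_mul_sq_mul_add_pow]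
  rw [integral_finsetSum _ fun j _ => (integrable_pow_mul_exp_neg_mul_sq hb j).const_mul _]
  simp only [integral_const_mul]
  have h0 : ∫ u : ℝ, u ^ 0 * exp (-b * u ^ 2) = √(π / b) := by simpa using integral_gaussian b
  have h1 := integral_pow_mul_exp_neg_mul_sq_of_odd (b := b) (k := 1) (by decide)
  have h3 := integral_pow_mul_exp_neg_mul_sq_of_odd (b := b) (k := 3) (by decide)
  interval_cases k <;>
    simp only [Finset.sum_range_succ, Finset.sum_range_zero, h0, h1, h3,
      integral_sq_mul_exp_neg_mul_sq hb] <;>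
    norm_num <;> field_simp <;> ring

end GaussianMoments

section FinTwo

variable {R : Type*} [CommSemiring R]

lemma eval_monomial_fin_two (a b : R) (m : Fin 2 →₀ ℕ) (c : R) :
    eval ![a, b] (monomial m c) = c * (a ^ m 0 * b ^ m 1) := by
  simp [eval_monomial, Finsupp.prod_pow, Fin.prod_univ_two]

lemma eval_laplacian_monomial_fin_two (a b : R) (m : Fin 2 →₀ ℕ) (c : R) :
    eval ![a, b] (pderiv 0 (pderiv 0 (monomial m c)) + pderiv 1 (pderiv 1 (monomial m c))) =
      c * ((m 0 * (m 0 - 1) : ℕ) * a ^ (m 0 - 2) * b ^ m 1 +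
        (m 1 * (m 1 - 1) : ℕ) * a ^ m 0 * b ^ (m 1 - 2)) := by
  simp only [pderiv_monomial, map_add, eval_monomial, Finsupp.prod_pow, Fin.prod_univ_two,
    Finsupp.coe_tsub, Pi.sub_apply, Finsupp.single_eq_same, Finsupp.single_apply, Nat.sub_sub,
    Matrix.cons_val_zero, Matrix.cons_val_one, Matrix.cons_val_fin_one, zero_ne_one, one_ne_zero,
    if_true, if_false, add_zero, tsub_zero, Nat.cast_mul]
  ring

lemma le_totalDegree_fin_two {p : MvPolynomial (Fin 2) R} {m : Fin 2 →₀ ℕ} (hm : m ∈ p.support) :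
    m 0 + m 1 ≤ p.totalDegree := by
  simpa [Finsupp.sum_fintype, Fin.sum_univ_two] using le_totalDegree hm

end FinTwo

section Kernel

variable {σ : ℝ} (x : ℝ × ℝ)

lemma gaussEtaScaled_sub (y : ℝ × ℝ) :
    gaussEtaScaled σ (x - y) = (σ ^ 2)⁻¹ * (4 / π) *
      (exp (-(σ ^ 2)⁻¹ * (x.1 - y.1) ^ 2) * exp (-(σ ^ 2)⁻¹ * (x.2 - y.2) ^ 2)) := by
  rw [gaussEtaScaled, gaussEta, ← exp_add]
  simp only [Prod.fst_sub, Prod.snd_sub, div_eq_mul_inv]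
  ring_nf

lemma integral_gaussEtaScaled_sub_mul_mul (f g : ℝ → ℝ) :
    ∫ y, gaussEtaScaled σ (x - y) * (f y.1 * g y.2) = (σ ^ 2)⁻¹ * (4 / π) *
      ((∫ t, exp (-(σ ^ 2)⁻¹ * (x.1 - t) ^ 2) * f t) *
        ∫ t, exp (-(σ ^ 2)⁻¹ * (x.2 - t) ^ 2) * g t) := by
  have h (y : ℝ × ℝ) : gaussEtaScaled σ (x - y) * (f y.1 * g y.2) = (σ ^ 2)⁻¹ * (4 / π) *
      ((exp (-(σ ^ 2)⁻¹ * (x.1 - y.1) ^ 2) * f y.1) *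
        (exp (-(σ ^ 2)⁻¹ * (x.2 - y.2) ^ 2) * g y.2)) := by
    rw [gaussEtaScaled_sub]; ring
  simp_rw [h]
  rw [integral_const_mul, Measure.volume_eq_prod]
  exact congrArg _ (integral_prod_mul (fun t => exp (-(σ ^ 2)⁻¹ * (x.1 - t) ^ 2) * f t)
    (fun t => exp (-(σ ^ 2)⁻¹ * (x.2 - t) ^ 2) * g t))

lemma integrable_gaussEtaScaled_sub_mul_mul {f g : ℝ → ℝ}
    (hf : Integrable fun t => exp (-(σ ^ 2)⁻¹ * (x.1 - t) ^ 2) * f t)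
    (hg : Integrable fun t => exp (-(σ ^ 2)⁻¹ * (x.2 - t) ^ 2) * g t) :
    Integrable fun y : ℝ × ℝ => gaussEtaScaled σ (x - y) * (f y.1 * g y.2) := by
  rw [Measure.volume_eq_prod]
  refine ((hf.mul_prod hg).const_mul ((σ ^ 2)⁻¹ * (4 / π))).congr
    (Filter.Eventually.of_forall fun y => ?_)
  simp only [gaussEtaScaled_sub]; ring

lemma integrable_gaussEtaScaled_sub_mul_pow_mul_pow (hσ : σ ≠ 0) (a b : ℕ) :
    Integrable fun y : ℝ × ℝ => gaussEtaScaled σ (x - y) * (y.1 ^ a * y.2 ^ b) :=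
  integrable_gaussEtaScaled_sub_mul_mul x
    (integrable_exp_neg_mul_sq_sub_mul_pow (by positivity) x.1 a)
    (integrable_exp_neg_mul_sq_sub_mul_pow (by positivity) x.2 b)

lemma integral_gaussEtaScaled_sub_mul_pow_mul_pow (hσ : σ ≠ 0) {a b : ℕ} (hab : a + b ≤ 3) :
    ∫ y : ℝ × ℝ, gaussEtaScaled σ (x - y) * (y.1 ^ a * y.2 ^ b) =
      4 * (x.1 ^ a * x.2 ^ b) + σ ^ 2 * ((a * (a - 1) : ℕ) * x.1 ^ (a - 2) * x.2 ^ b +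
        (b * (b - 1) : ℕ) * x.1 ^ a * x.2 ^ (b - 2)) := by
  have hβ : (0 : ℝ) < (σ ^ 2)⁻¹ := by positivity
  have hcross : ((a * (a - 1) : ℕ) : ℝ) * (b * (b - 1) : ℕ) = 0 := by
    rcases (by omega : a ≤ 1 ∨ b ≤ 1) with h | h
    · interval_cases a <;> simp
    · interval_cases b <;> simp
  rw [integral_gaussEtaScaled_sub_mul_mul x (· ^ a) (· ^ b),
    integral_exp_neg_mul_sq_sub_mul_pow hβ x.1 (by omega),
    integral_exp_neg_mul_sq_sub_mul_pow hβ x.2 (by omega)]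
  field_simp
  rw [sq_sqrt (by positivity)]
  linear_combination (σ ^ 6 * π * x.1 ^ (a - 2) * x.2 ^ (b - 2)) * hcross

lemma integrable_gaussEtaScaled_sub_mul_eval (hσ : σ ≠ 0) (p : MvPolynomial (Fin 2) ℝ) :
    Integrable fun y : ℝ × ℝ => gaussEtaScaled σ (x - y) * eval ![y.1, y.2] p := by
  rw [p.as_sum]
  simp only [map_sum, Finset.mul_sum, eval_monomial_fin_two, mul_left_comm _ (coeff _ p)]
  exact integrable_finsetSum _ fun m _ =>
    (integrable_gaussEtaScaled_sub_mul_pow_mul_pow x hσ (m 0) (m 1)).const_mul _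

lemma integral_gaussEtaScaled_sub_mul_eval (hσ : σ ≠ 0) {p : MvPolynomial (Fin 2) ℝ}
    (hp : p.totalDegree ≤ 3) :
    ∫ y : ℝ × ℝ, gaussEtaScaled σ (x - y) * eval ![y.1, y.2] p =
      4 * eval ![x.1, x.2] p +
        σ ^ 2 * eval ![x.1, x.2] (pderiv 0 (pderiv 0 p) + pderiv 1 (pderiv 1 p)) := by
  rw [p.as_sum]
  simp only [map_sum, Finset.mul_sum, ← Finset.sum_add_distrib, eval_monomial_fin_two,
    eval_laplacian_monomial_fin_two, mul_left_comm _ (coeff _ p)]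
  rw [integral_finsetSum _ fun m _ =>
    (integrable_gaussEtaScaled_sub_mul_pow_mul_pow x hσ (m 0) (m 1)).const_mul _]
  refine Finset.sum_congr rfl fun m hm => ?_
  rw [integral_const_mul, integral_gaussEtaScaled_sub_mul_pow_mul_pow x hσ
    ((le_totalDegree_fin_two hm).trans hp)]
  ring

end Kernel

/-- The integral approximation `σ⁻² ∫ η_σ(x-y) (p(y) - p(x)) dy` of the Laplacian used in
the weighted particle method is exact on polynomials of total degree at most 3. -/
theorem integral_laplacian_exact_on_cubics
    (p : MvPolynomial (Fin 2) ℝ) (hp : p.totalDegree ≤ 3)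
    (x : ℝ × ℝ) (σ : ℝ) (hσ : 0 < σ) :
    (σ ^ 2)⁻¹ *
        ∫ y : ℝ × ℝ, gaussEtaScaled σ (x - y) *
          (eval ![y.1, y.2] p - eval ![x.1, x.2] p) =
      eval ![x.1, x.2] (pderiv 0 (pderiv 0 p) + pderiv 1 (pderiv 1 p)) := by
  have hmass : ∫ y : ℝ × ℝ, gaussEtaScaled σ (x - y) = 4 := by
    simpa using integral_gaussEtaScaled_sub_mul_eval x hσ.ne' (p := 1) (by simp)
  have hint : Integrable fun y : ℝ × ℝ => gaussEtaScaled σ (x - y) := by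
    simpa using integrable_gaussEtaScaled_sub_mul_eval x hσ.ne' 1
  simp only [mul_sub]
  rw [integral_sub (integrable_gaussEtaScaled_sub_mul_eval x hσ.ne' p) (hint.mul_const _),
    integral_gaussEtaScaled_sub_mul_eval x hσ.ne' hp, integral_mul_const, hmass,
    add_sub_cancel_left, inv_mul_cancel_left₀ (pow_ne_zero 2 hσ.ne')]
end

section
/- Let n ≥ 1, let F : ℝⁿ → ℝⁿ, and let Δt₀ > 0 be such that for every componentwise nonnegative y ∈ ℝⁿ and every 0 ≤ Δt ≤ Δt₀ the forward Euler step y + Δt·F(y) is componentwise nonnegative. Then for every componentwise nonnegative y ∈ ℝⁿ and every 0 ≤ Δt ≤ Δt₀, the result of one step of the three-stage third-order SSP Runge–Kutta method, namely y⁽¹⁾ = y + Δt·F(y), y⁽²⁾ = (3/4)·y + (1/4)·(y⁽¹⁾ + Δt·F(y⁽¹⁾)), y⁺ = (1/3)·y + (2/3)·(y⁽²⁾ + Δt·F(y⁽²⁾)), is componentwise nonnegative. -/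
/-- If every forward Euler step with step size `0 ≤ Δt ≤ Δt₀` preserves componentwise
nonnegativity for the ODE `y' = F(y)`, then so does one step of the three-stage third-order
SSP Runge–Kutta method:
`y⁽¹⁾ = y + Δt F(y)`, `y⁽²⁾ = (3/4) y + (1/4)(y⁽¹⁾ + Δt F(y⁽¹⁾))`,
`y⁺ = (1/3) y + (2/3)(y⁽²⁾ + Δt F(y⁽²⁾))`. -/
theorem sspRK3_preserves_nonneg
    (n : ℕ) (hn : 1 ≤ n)
    (F : (Fin n → ℝ) → (Fin n → ℝ))
    (Δt₀ : ℝ) (hΔt₀ : 0 < Δt₀)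
    (hFE : ∀ y : Fin n → ℝ, (∀ i, 0 ≤ y i) →
      ∀ Δt : ℝ, 0 ≤ Δt → Δt ≤ Δt₀ → ∀ i, 0 ≤ y i + Δt * F y i)
    (y : Fin n → ℝ) (hy : ∀ i, 0 ≤ y i)
    (Δt : ℝ) (hΔt₁ : 0 ≤ Δt) (hΔt₂ : Δt ≤ Δt₀) :
    let y1 : Fin n → ℝ := fun i => y i + Δt * F y i
    let y2 : Fin n → ℝ := fun i => (3 / 4) * y i + (1 / 4) * (y1 i + Δt * F y1 i)
    ∀ i, 0 ≤ (1 / 3) * y i + (2 / 3) * (y2 i + Δt * F y2 i) := by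
  intro y1 y2 i
  have hy1 : ∀ i, 0 ≤ y1 i := hFE y hy Δt hΔt₁ hΔt₂
  have hy2 : ∀ i, 0 ≤ y2 i := by
    intro j
    have h1 := hFE y1 hy1 Δt hΔt₁ hΔt₂ j
    have := hy j
    exact add_nonneg (mul_nonneg (by norm_num) (hy j)) (mul_nonneg (by norm_num) h1)
  have h2 := hFE y2 hy2 Δt hΔt₁ hΔt₂ i
  exact add_nonneg (mul_nonneg (by norm_num) (hy i)) (mul_nonneg (by norm_num) h2)
end
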